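/- arXiv:1602.04010 — 3 statements merged into one kernel-verified Lean document; each statement's English description precedes it below -/
import Mathlib

section
/- The function T(y) = T_c - (T_c²/(2 T_a))·ln(cosh(b y)) with b² = 2 σ⁵ T_a/(k K_c⁴ T_c²) satisfies k T''(y) + (σ⁵/K_c⁴)·exp(-4 T_a (T_c - T(y))/T_c²) = 0 for all y, together with T'(0) = 0 and T(0) = T_c. -/
/-! Substituting `T` turns the exponential into `exp (-2 log cosh (b y)) = cosh (b y)⁻²`, while
`T'' = -(T_c² b² / (2 T_a)) cosh (b y)⁻²` because `(log cosh)' = tanh` and `tanh' = cosh⁻²`;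
the choice of `b` makes the two coefficients cancel. -/

open Real

namespace Real

theorem hasDerivAt_log_cosh (x : ℝ) : HasDerivAt (fun x => log (cosh x)) (tanh x) x := by
  simpa [tanh_eq_sinh_div_cosh] using (hasDerivAt_cosh x).log (cosh_pos x).ne'

theorem hasDerivAt_tanh (x : ℝ) : HasDerivAt tanh (cosh x ^ 2)⁻¹ x := by
  have h := (hasDerivAt_sinh x).div (hasDerivAt_cosh x) (cosh_pos x).ne'
  rw [← sq, ← sq, cosh_sq_sub_sinh_sq, one_div] at h
  rwa [show tanh = sinh / cosh from funext tanh_eq_sinh_div_cosh]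

theorem exp_neg_two_mul_log_cosh (x : ℝ) : exp (-(2 * log (cosh x))) = (cosh x ^ 2)⁻¹ := by
  rw [exp_neg, two_mul, exp_add, exp_log (cosh_pos x), sq]

end Real

section LogCoshProfile

variable (c a b : ℝ)

theorem deriv_const_sub_mul_log_cosh :
    deriv (fun y => c - a * log (cosh (b * y))) = fun y => -(a * b) * tanh (b * y) := by
  funext y
  have h := ((hasDerivAt_log_cosh (b * y)).comp y ((hasDerivAt_id y).const_mul b)).const_mul a
  refine ((hasDerivAt_const y c).sub h).deriv.trans ?_
  simp only [mul_one]
  ring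

theorem deriv_deriv_const_sub_mul_log_cosh (y : ℝ) :
    deriv (deriv fun y => c - a * log (cosh (b * y))) y = -(a * b ^ 2) * (cosh (b * y) ^ 2)⁻¹ := by
  rw [deriv_const_sub_mul_log_cosh]
  have h := ((hasDerivAt_tanh (b * y)).comp y ((hasDerivAt_id y).const_mul b)).const_mul (-(a * b))
  refine h.deriv.trans ?_
  simp only [mul_one]
  ring

end LogCoshProfile

theorem stmt8 (k σ Kc Ta Tc : ℝ) (hk : 0 < k) (hσ : 0 < σ) (hKc : 0 < Kc)
    (hTa : 0 < Ta) (hTc : 0 < Tc) (b : ℝ)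
    (hb : b = Real.sqrt (2 * σ ^ 5 * Ta / (k * Kc ^ 4 * Tc ^ 2)))
    (T : ℝ → ℝ)
    (hT : ∀ y, T y = Tc - Tc ^ 2 / (2 * Ta) * Real.log (Real.cosh (b * y))) :
    (∀ y, k * deriv (deriv T) y +
      σ ^ 5 / Kc ^ 4 * Real.exp (-4 * Ta * (Tc - T y) / Tc ^ 2) = 0) ∧
    deriv T 0 = 0 ∧ T 0 = Tc := by
  have hb_sq : b ^ 2 = 2 * σ ^ 5 * Ta / (k * Kc ^ 4 * Tc ^ 2) := by
    rw [hb, sq_sqrt (by positivity)]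
  have hcoeff : k * (Tc ^ 2 / (2 * Ta) * b ^ 2) = σ ^ 5 / Kc ^ 4 := by
    rw [hb_sq]
    field_simp
  obtain rfl : T = fun y => Tc - Tc ^ 2 / (2 * Ta) * log (cosh (b * y)) := funext hT
  refine ⟨fun y => ?_, by rw [deriv_const_sub_mul_log_cosh]; simp, by simp⟩
  have hexponent : -4 * Ta * (Tc - (Tc - Tc ^ 2 / (2 * Ta) * log (cosh (b * y)))) / Tc ^ 2 =
      -(2 * log (cosh (b * y))) := by
    field_simp
    ring
  rw [deriv_deriv_const_sub_mul_log_cosh, hexponent, exp_neg_two_mul_log_cosh, ← hcoeff]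
  ring
end

section
/- Given the scaling relations kδ/h² = T_m⁴ S⁵/(κ_m⁴ δ⁴), δ/h = G_E, G_E = S U_e/k, V_E = P T_m⁴ S³ h³/(L² κ_m⁴ δ⁴), and G_E = V_E ρ c_p (T_m - T_e)/k, with all quantities positive, it follows that V_E = (k T_m/κ_m)^{4/3} (P^{1/2}/L) (ρ c_p (T_m - T_e))^{-1/2} U_e^{-2/3}. -/
/-!
Substituting `δ = G_E h`, `G_E = S U_e / k` and `S = V_E A / U_e` (with `A = ρ c_p (T_m - T_e)`)
turns the two remaining balances into monomial relations `U_e⁵ h³ κ_m⁴ = k⁴ T_m⁴` and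
`V_E² A U_e³ h κ_m⁴ L² = k⁴ T_m⁴ P`. Cubing the second and dividing by the first eliminates `h`,
leaving `V_E⁶ L⁶ κ_m⁸ A³ U_e⁴ = P³ T_m⁸ k⁸`; the claim is its positive sixth root.
-/

theorem pow_six_balance_of_scaling {k δ h Tm S κm GE Ue VE P L A : ℝ}
    (hk : 0 < k) (hh : 0 < h) (hTm : 0 < Tm) (hκm : 0 < κm) (hUe : 0 < Ue) (hVE : 0 < VE)
    (hL : 0 < L) (hA : 0 < A)
    (e1 : k * δ / h ^ 2 = Tm ^ 4 * S ^ 5 / (κm ^ 4 * δ ^ 4))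
    (e2 : δ / h = GE) (e3 : GE = S * Ue / k)
    (e4 : VE = P * Tm ^ 4 * S ^ 3 * h ^ 3 / (L ^ 2 * κm ^ 4 * δ ^ 4))
    (e5 : GE = VE * A / k) :
    VE ^ 6 * L ^ 6 * κm ^ 8 * A ^ 3 * Ue ^ 4 = P ^ 3 * Tm ^ 8 * k ^ 8 := by
  obtain rfl : δ = GE * h := by rw [← e2]; field_simp
  subst e3
  obtain rfl : S = VE * A / Ue := by
    rw [eq_div_iff hUe.ne']
    field_simp at e5
    linarith
  field_simp at e1 e4
  refine mul_right_cancel₀ (by positivity : k ^ 4 * Tm ^ 4 ≠ 0) ?_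
  linear_combination (-(VE ^ 6 * L ^ 6 * κm ^ 8 * A ^ 3 * Ue ^ 4)) * e1 + congrArg (· ^ 3) e4

theorem eq_of_pow_six_balance {k Tm κm Ue VE P L A : ℝ} (hk : 0 < k) (hTm : 0 < Tm)
    (hκm : 0 < κm) (hUe : 0 < Ue) (hVE : 0 < VE) (hP : 0 < P) (hL : 0 < L) (hA : 0 < A)
    (h : VE ^ 6 * L ^ 6 * κm ^ 8 * A ^ 3 * Ue ^ 4 = P ^ 3 * Tm ^ 8 * k ^ 8) :
    VE = (k * Tm / κm) ^ ((4:ℝ)/3) * (P ^ ((1:ℝ)/2) / L) * A ^ (-(1:ℝ)/2) *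
      Ue ^ (-(2:ℝ)/3) := by
  refine (pow_left_inj₀ (n := 6) hVE.le (by positivity) (by norm_num)).mp ?_
  rw [mul_pow, mul_pow, mul_pow, div_pow, ← Real.rpow_mul_natCast (by positivity),
    ← Real.rpow_mul_natCast hP.le, ← Real.rpow_mul_natCast hA.le,
    ← Real.rpow_mul_natCast hUe.le]
  norm_num
  field_simp
  linear_combination h

theorem stmt15_general (k δ h Tm S κm GE Ue VE P L ρ cp Te : ℝ)
    (hk : 0 < k) (hh : 0 < h) (hTm : 0 < Tm)
    (hκm : 0 < κm) (hUe : 0 < Ue) (hVE : 0 < VE) (hP : 0 < P)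
    (hL : 0 < L) (hρ : 0 < ρ) (hcp : 0 < cp) (hTe : Te < Tm)
    (e1 : k * δ / h ^ 2 = Tm ^ 4 * S ^ 5 / (κm ^ 4 * δ ^ 4))
    (e2 : δ / h = GE) (e3 : GE = S * Ue / k)
    (e4 : VE = P * Tm ^ 4 * S ^ 3 * h ^ 3 / (L ^ 2 * κm ^ 4 * δ ^ 4))
    (e5 : GE = VE * ρ * cp * (Tm - Te) / k) :
    VE = (k * Tm / κm) ^ ((4:ℝ)/3) * (P ^ ((1:ℝ)/2) / L) *
      (ρ * cp * (Tm - Te)) ^ (-(1:ℝ)/2) * Ue ^ (-(2:ℝ)/3) := by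
  have hA : 0 < ρ * cp * (Tm - Te) := by have := sub_pos.mpr hTe; positivity
  refine eq_of_pow_six_balance hk hTm hκm hUe hVE hP hL hA ?_
  exact pow_six_balance_of_scaling hk hh hTm hκm hUe hVE hL hA e1 e2 e3 e4 (by rw [e5]; ring)

theorem stmt15 (k δ h Tm S κm GE Ue VE P L ρ cp Te : ℝ)
    (hk : 0 < k) (hδ : 0 < δ) (hh : 0 < h) (hTm : 0 < Tm) (hS : 0 < S)
    (hκm : 0 < κm) (hGE : 0 < GE) (hUe : 0 < Ue) (hVE : 0 < VE) (hP : 0 < P)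
    (hL : 0 < L) (hρ : 0 < ρ) (hcp : 0 < cp) (hTe : Te < Tm)
    (e1 : k * δ / h ^ 2 = Tm ^ 4 * S ^ 5 / (κm ^ 4 * δ ^ 4))
    (e2 : δ / h = GE) (e3 : GE = S * Ue / k)
    (e4 : VE = P * Tm ^ 4 * S ^ 3 * h ^ 3 / (L ^ 2 * κm ^ 4 * δ ^ 4))
    (e5 : GE = VE * ρ * cp * (Tm - Te) / k) :
    VE = (k * Tm / κm) ^ ((4:ℝ)/3) * (P ^ ((1:ℝ)/2) / L) *
      (ρ * cp * (Tm - Te)) ^ (-(1:ℝ)/2) * Ue ^ (-(2:ℝ)/3) :=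
  stmt15_general k δ h Tm S κm GE Ue VE P L ρ cp Te hk hh hTm hκm hUe hVE hP hL hρ hcp hTe e1 e2 e3
    e4 e5
end

section
/- Under the same five scaling relations, h = (k T_m/κ_m)^{4/3} U_e^{-5/3} and S = (k T_m/κ_m)^{4/3}(P^{1/2}/L)(ρ c_p (T_m - T_e))^{1/2} U_e^{-5/3}. -/
/-!
Substituting `δ = G_E h = S U_e h / k` into the first relation cancels `S` and leaves
`h³ U_e⁵ = (k T_m / κ_m)⁴`, which determines `h` as a positive cube root. Substituting the
same `δ` into the expression for `V_E`, and `V_E = S U_e / (ρ c_p (T_m - T_e))` from the flux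
balance, then reduces to `S² L² = P h² ρ c_p (T_m - T_e)`, so `S = h √(P ρ c_p (T_m - T_e)) / L`.
-/

open Real

lemma rpow_div_natCast_pow {x : ℝ} (hx : 0 ≤ x) (y : ℝ) {n : ℕ} (hn : n ≠ 0) :
    (x ^ (y / n)) ^ n = x ^ y := by
  rw [← rpow_mul_natCast hx, div_mul_cancel₀ _ (by exact_mod_cast hn)]

lemma eq_rpow_mul_rpow_of_pow_three_mul_pow_five_eq {h X U : ℝ} (hh : 0 ≤ h) (hX : 0 ≤ X)
    (hU : 0 < U) (hcube : h ^ 3 * U ^ 5 = X ^ 4) :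
    h = X ^ ((4:ℝ)/3) * U ^ (-(5:ℝ)/3) := by
  have hpos : 0 ≤ X ^ ((4:ℝ)/3) * U ^ (-(5:ℝ)/3) := by positivity
  refine (pow_left_inj₀ hh hpos three_ne_zero).1 ?_
  have hX4 : (X ^ ((4:ℝ)/3)) ^ 3 = X ^ 4 := by
    exact_mod_cast rpow_div_natCast_pow hX 4 three_ne_zero
  have hU5 : (U ^ (-(5:ℝ)/3)) ^ 3 * U ^ 5 = 1 := by
    have hU3 := rpow_div_natCast_pow hU.le (-5) three_ne_zero
    push_cast at hU3
    rw [hU3, rpow_neg hU.le, inv_mul_eq_one₀ (by positivity)]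
    exact_mod_cast rfl
  rw [mul_pow]
  linear_combination (-h ^ 3) * hU5 + (U ^ (-(5:ℝ)/3)) ^ 3 * hcube - (U ^ (-(5:ℝ)/3)) ^ 3 * hX4

lemma eq_mul_sqrt_div_of_sq_mul_sq_eq {S L h P D : ℝ} (hS : 0 ≤ S) (hL : 0 < L) (hh : 0 ≤ h)
    (hsq : S ^ 2 * L ^ 2 = P * h ^ 2 * D) : S = h * √(P * D) / L := by
  rw [eq_div_iff hL.ne', ← sqrt_sq (by positivity : 0 ≤ S * L), mul_pow, hsq,
    show P * h ^ 2 * D = h ^ 2 * (P * D) by ring, sqrt_mul (by positivity), sqrt_sq hh]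

namespace ScalingLaw

variable {k δ h Tm S κm Ue VE P L ρ cp Te : ℝ}

lemma pow_three_mul_pow_five_eq (hk : k ≠ 0) (hh : h ≠ 0) (hS : S ≠ 0) (hκm : κm ≠ 0)
    (hUe : Ue ≠ 0) (hδ : δ = S * Ue * h / k)
    (e1 : k * δ / h ^ 2 = Tm ^ 4 * S ^ 5 / (κm ^ 4 * δ ^ 4)) :
    h ^ 3 * Ue ^ 5 = (k * Tm / κm) ^ 4 := by
  subst hδ
  field_simp at e1 ⊢
  exact e1

lemma sq_mul_sq_eq (hh : h ≠ 0) (hS : S ≠ 0) (hκm : κm ≠ 0) (hUe : Ue ≠ 0) (hL : L ≠ 0)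
    (hδ : δ = S * Ue * h / k) (hcube : h ^ 3 * Ue ^ 5 = (k * Tm / κm) ^ 4)
    (e4 : VE = P * Tm ^ 4 * S ^ 3 * h ^ 3 / (L ^ 2 * κm ^ 4 * δ ^ 4))
    (hflux : S * Ue = VE * (ρ * cp * (Tm - Te))) :
    S ^ 2 * L ^ 2 = P * h ^ 2 * (ρ * cp * (Tm - Te)) := by
  subst hδ e4
  field_simp at hcube hflux ⊢
  refine mul_right_cancel₀ (by positivity : h * Ue ^ 5 * κm ^ 4 ≠ 0) ?_
  linear_combination hflux - P * ρ * cp * (Tm - Te) * hcube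

end ScalingLaw

open ScalingLaw in
theorem stmt16_general (k δ h Tm S κm GE Ue VE P L ρ cp Te : ℝ)
    (hk : 0 < k) (hh : 0 < h) (hTm : 0 < Tm) (hS : 0 < S)
    (hκm : 0 < κm) (hUe : 0 < Ue) (hP : 0 < P)
    (hL : 0 < L)
    (e1 : k * δ / h ^ 2 = Tm ^ 4 * S ^ 5 / (κm ^ 4 * δ ^ 4))
    (e2 : δ / h = GE) (e3 : GE = S * Ue / k)
    (e4 : VE = P * Tm ^ 4 * S ^ 3 * h ^ 3 / (L ^ 2 * κm ^ 4 * δ ^ 4))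
    (e5 : GE = VE * ρ * cp * (Tm - Te) / k) :
    h = (k * Tm / κm) ^ ((4:ℝ)/3) * Ue ^ (-(5:ℝ)/3) ∧
    S = (k * Tm / κm) ^ ((4:ℝ)/3) * (P ^ ((1:ℝ)/2) / L) *
      (ρ * cp * (Tm - Te)) ^ ((1:ℝ)/2) * Ue ^ (-(5:ℝ)/3) := by
  have hδ : δ = S * Ue * h / k := by
    rw [mul_div_right_comm, ← e3, ← e2, div_mul_cancel₀ _ hh.ne']
  have hflux : S * Ue = VE * (ρ * cp * (Tm - Te)) := by
    rw [e3] at e5; field_simp at e5; linear_combination e5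
  have hcube := pow_three_mul_pow_five_eq hk.ne' hh.ne' hS.ne' hκm.ne' hUe.ne' hδ e1
  have hh_eq := eq_rpow_mul_rpow_of_pow_three_mul_pow_five_eq hh.le (by positivity) hUe hcube
  have hsq := sq_mul_sq_eq hh.ne' hS.ne' hκm.ne' hUe.ne' hL.ne' hδ hcube e4 hflux
  refine ⟨hh_eq, ?_⟩
  rw [← sqrt_eq_rpow, ← sqrt_eq_rpow, eq_mul_sqrt_div_of_sq_mul_sq_eq hS.le hL hh.le hsq,
    sqrt_mul hP.le, hh_eq]
  ring

theorem stmt16 (k δ h Tm S κm GE Ue VE P L ρ cp Te : ℝ)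
    (hk : 0 < k) (hδ : 0 < δ) (hh : 0 < h) (hTm : 0 < Tm) (hS : 0 < S)
    (hκm : 0 < κm) (hGE : 0 < GE) (hUe : 0 < Ue) (hVE : 0 < VE) (hP : 0 < P)
    (hL : 0 < L) (hρ : 0 < ρ) (hcp : 0 < cp) (hTe : Te < Tm)
    (e1 : k * δ / h ^ 2 = Tm ^ 4 * S ^ 5 / (κm ^ 4 * δ ^ 4))
    (e2 : δ / h = GE) (e3 : GE = S * Ue / k)
    (e4 : VE = P * Tm ^ 4 * S ^ 3 * h ^ 3 / (L ^ 2 * κm ^ 4 * δ ^ 4))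
    (e5 : GE = VE * ρ * cp * (Tm - Te) / k) :
    h = (k * Tm / κm) ^ ((4:ℝ)/3) * Ue ^ (-(5:ℝ)/3) ∧
    S = (k * Tm / κm) ^ ((4:ℝ)/3) * (P ^ ((1:ℝ)/2) / L) *
      (ρ * cp * (Tm - Te)) ^ ((1:ℝ)/2) * Ue ^ (-(5:ℝ)/3) :=
  stmt16_general k δ h Tm S κm GE Ue VE P L ρ cp Te hk hh hTm hS hκm hUe hP hL e1 e2 e3 e4 e5
end
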